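/- Suppose M_r ∈ ℝ^{ρ_r×p} and M_c ∈ ℝ^{n×ρ_c} satisfy the RIP with constant δ ∈ (0,1): (1−δ)‖Y‖_F² ≤ (np/(ρ_r ρ_c)) ‖M_r Y M_c‖_F² ≤ (1+δ)‖Y‖_F² for all Y ∈ LR(P_{k_r}, Q_{k_c}). Assume λ_{k_c+1} > 0 and λ_{k_r+1} > 0, let γ > 0, and set γ̄_c = γ/λ_{k_c+1}, γ̄_r = γ/λ_{k_r+1}. Let X̄ ∈ LR(P_{k_r}, Q_{k_c}), Ẽ ∈ ℝ^{ρ_r×ρ_c}, X̃ = M_r X̄ M_c + Ẽ, and let X* be a minimizer over X ∈ ℝ^{p×n} of ‖M_r X M_c − X̃‖_F² + γ̄_c tr(X L_c X^⊤) + γ̄_r tr(X^⊤ L_r X). With X̄* = P_{k_r} P_{k_r}^⊤ X* Q_{k_c} Q_{k_c}^⊤ and E* = X* − X̄*, one has ‖E*‖_F ≤ ‖Ẽ‖_F/√(2γ) + (1/√2) √(λ_{k_c}/λ_{k_c+1} + λ_{k_r}/λ_{k_r+1}) ‖X̄‖_F. -/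

import Mathlib

/-!
Write `f` for the objective and `f₀` for the same objective with zero data. Since `f` is
quadratic, minimality of `X*` gives `f X* + f₀ (X̄ - X*) ≤ f X̄`. In the eigen-coordinates
`W = Pᵀ X* Q`, the error `X* - X̄*` is `W` with its leading `k_r × k_c` block removed, so
`‖E*‖²` is at most the energy of `W` in rows `≥ k_r` plus its energy in columns `≥ k_c`.
The eigenvalues there are at least `λ_{k_r+1}`, `λ_{k_c+1}`, so the penalty of `f X*` bounds
`γ` times this tail energy; so does the penalty of `f₀ (X̄ - X*)`, because `X̄` has no energy
outside the leading block. The same fact gives `f X̄ ≤ ‖Ẽ‖² + γ (λ_{k_c}/λ_{k_c+1} +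
λ_{k_r}/λ_{k_r+1}) ‖X̄‖²`. Chaining these, `2γ ‖E*‖²` is bounded by the same quantity, and
the claim follows by taking square roots.
-/

open Matrix

/-- Frobenius norm of a real matrix. -/
noncomputable def frobNorm {m n : Type*} [Fintype m] [Fintype n] (A : Matrix m n ℝ) : ℝ :=
  Real.sqrt (∑ i, ∑ j, (A i j) ^ 2)

/-- Euclidean norm of a real vector. -/
noncomputable def vecNorm {n : Type*} [Fintype n] (x : n → ℝ) : ℝ :=
  Real.sqrt (∑ i, (x i) ^ 2)

/-- A row-selection matrix: its rows are distinct standard basis vectors of `ℝ^p`. -/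
def IsRowSelection {ρ p : ℕ} (M : Matrix (Fin ρ) (Fin p) ℝ) : Prop :=
  ∃ f : Fin ρ → Fin p, Function.Injective f ∧ ∀ i j, M i j = if j = f i then 1 else 0

/-- A column-selection matrix: its columns are distinct standard basis vectors of `ℝ^n`. -/
def IsColSelection {n ρ : ℕ} (M : Matrix (Fin n) (Fin ρ) ℝ) : Prop :=
  ∃ f : Fin ρ → Fin n, Function.Injective f ∧ ∀ i j, M i j = if i = f j then 1 else 0

/-- `y` lies in the span of the columns of `P`. -/
def inColSpan {p k : ℕ} (P : Matrix (Fin p) (Fin k) ℝ) (y : Fin p → ℝ) : Prop :=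
  ∃ c : Fin k → ℝ, y = P.mulVec c

/-- `Y ∈ LR(P, Q)`: every column of `Y` lies in the column span of `P` and every row of `Y`
lies in the column span of `Q`. -/
def memLR {p n kr kc : ℕ} (P : Matrix (Fin p) (Fin kr) ℝ) (Q : Matrix (Fin n) (Fin kc) ℝ)
    (Y : Matrix (Fin p) (Fin n) ℝ) : Prop :=
  (∀ j, inColSpan P (fun i => Y i j)) ∧ (∀ i, inColSpan Q (fun j => Y i j))

/-- Graph cumulative coherence `ν = max_i √n ‖Q^⊤ e_i‖₂`. -/
noncomputable def coherence {n k : ℕ} (Q : Matrix (Fin n) (Fin k) ℝ) : ℝ :=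
  ⨆ i : Fin n, Real.sqrt n * vecNorm (fun j => Q i j)

theorem nonneg_of_forall_mul_add_sq_mul_nonneg {a b : ℝ} (h : ∀ t : ℝ, 0 ≤ t * a + t ^ 2 * b) :
    0 ≤ a := by
  by_contra! ha
  -- at `t = -a / (|b| + 1) > 0`, `t * a + t ^ 2 * b ≤ t * a / (|b| + 1) < 0`
  set t := -a / (|b| + 1)
  have ht : 0 < t := div_pos (neg_pos.mpr ha) (by positivity)
  have htb : t * b ≤ t * |b| := mul_le_mul_of_nonneg_left (le_abs_self b) ht.le
  have hta : t * (|b| + 1) = -a := div_mul_cancel₀ _ (by positivity)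
  nlinarith [h t]

theorem add_le_of_forall_le_of_quadratic {V : Type*} [AddCommGroup V] [Module ℝ V]
    {f g : V → ℝ} {x : V} (hf : ∀ h, ∃ ℓ : ℝ, ∀ t : ℝ, f (x + t • h) = f x + t * ℓ + t ^ 2 * g h)
    (hmin : ∀ y, f x ≤ f y) (y : V) : f x + g (y - x) ≤ f y := by
  obtain ⟨ℓ, hℓ⟩ := hf (y - x)
  have hℓ0 : 0 ≤ ℓ := nonneg_of_forall_mul_add_sq_mul_nonneg (b := g (y - x)) fun t => by
    linarith [hmin (x + t • (y - x)), hℓ t]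
  have h1 := hℓ 1
  rw [one_smul, add_sub_cancel] at h1
  linarith

theorem le_div_sqrt_add_mul_sqrt_mul {e a r x γ : ℝ} (hγ : 0 < γ) (ha : 0 ≤ a) (hr : 0 ≤ r)
    (hx : 0 ≤ x) (h : 2 * γ * e ^ 2 ≤ a ^ 2 + γ * r * x ^ 2) :
    e ≤ a / Real.sqrt (2 * γ) + 1 / Real.sqrt 2 * Real.sqrt r * x := by
  have hs2γ : Real.sqrt (2 * γ) ^ 2 = 2 * γ := Real.sq_sqrt (by positivity)
  have hs2 : Real.sqrt 2 ^ 2 = 2 := Real.sq_sqrt (by positivity)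
  have hsr : Real.sqrt r ^ 2 = r := Real.sq_sqrt hr
  set u := a / Real.sqrt (2 * γ)
  set v := 1 / Real.sqrt 2 * Real.sqrt r * x
  have hu : 0 ≤ u := by positivity
  have hv : 0 ≤ v := by positivity
  have hu2 : 2 * γ * u ^ 2 = a ^ 2 := by simp only [u, div_pow, hs2γ]; field_simp
  have hv2 : 2 * v ^ 2 = r * x ^ 2 := by simp only [v, mul_pow, div_pow, hs2, hsr]; field_simp
  have hsq : e ^ 2 ≤ (u + v) ^ 2 := by nlinarith [mul_nonneg hu hv]
  exact abs_le_of_sq_le_sq hsq (by positivity) |>.trans' (le_abs_self e)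

section Frobenius

variable {m n : Type*} [Fintype m] [Fintype n]

theorem frobNorm_nonneg (A : Matrix m n ℝ) : 0 ≤ frobNorm A := Real.sqrt_nonneg _

theorem frobNorm_sq (A : Matrix m n ℝ) : frobNorm A ^ 2 = ∑ i, ∑ j, A i j ^ 2 :=
  Real.sq_sqrt (by positivity)

theorem frobNorm_sq_eq_trace (A : Matrix m n ℝ) : frobNorm A ^ 2 = trace (A * Aᵀ) := by
  rw [frobNorm_sq]
  simp [trace, mul_apply, sq]

theorem frobNorm_neg (A : Matrix m n ℝ) : frobNorm (-A) = frobNorm A := by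
  simp [frobNorm]

theorem frobNorm_transpose (A : Matrix m n ℝ) : frobNorm Aᵀ = frobNorm A := by
  simp only [frobNorm, transpose_apply]
  rw [Finset.sum_comm]

theorem trace_add_smul_mul_mul_transpose_add_smul (X H : Matrix m n ℝ) (L : Matrix n n ℝ) (t : ℝ) :
    trace ((X + t • H) * L * (X + t • H)ᵀ) =
      trace (X * L * Xᵀ) + t * (trace (X * L * Hᵀ) + trace (H * L * Xᵀ))
        + t ^ 2 * trace (H * L * Hᵀ) := by
  simp only [transpose_add, transpose_smul, Matrix.add_mul, Matrix.mul_add, Matrix.smul_mul,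
    Matrix.mul_smul, trace_add, trace_smul, smul_eq_mul]
  grind

theorem trace_mul_diagonal_mul_transpose (W : Matrix m n ℝ) (ev : n → ℝ) [DecidableEq n] :
    trace (W * diagonal ev * Wᵀ) = ∑ i, ∑ j, ev j * W i j ^ 2 := by
  simp only [trace, diag, mul_apply, diagonal_apply, mul_ite, mul_zero, Finset.sum_ite_eq',
    Finset.mem_univ, if_true, transpose_apply]
  exact Finset.sum_congr rfl fun i _ => Finset.sum_congr rfl fun j _ => by ring

end Frobenius

section SpectralCoordinates

variable {p n : Type*} [Fintype p] [Fintype n] [DecidableEq p] [DecidableEq n]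

theorem trace_mul_mul_transpose_eq_sum_eigen {P : Matrix p p ℝ} {Q L : Matrix n n ℝ} {ev : n → ℝ}
    (hP : P * Pᵀ = 1) (hQ : Q * Qᵀ = 1) (hL : L * Q = Q * diagonal ev) (X : Matrix p n ℝ) :
    trace (X * L * Xᵀ) = ∑ i, ∑ j, ev j * (Pᵀ * X * Q) i j ^ 2 := by
  have hLQ : L = Q * diagonal ev * Qᵀ := by
    rw [← hL, Matrix.mul_assoc, hQ, Matrix.mul_one]
  have hconj : Pᵀ * X * Q * diagonal ev * (Pᵀ * X * Q)ᵀ = Pᵀ * (X * L * Xᵀ * P) := by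
    rw [hLQ]
    simp only [transpose_mul, transpose_transpose, Matrix.mul_assoc]
  rw [← trace_mul_diagonal_mul_transpose, hconj, trace_mul_comm Pᵀ, Matrix.mul_assoc _ P, hP,
    Matrix.mul_one]

theorem frobNorm_sq_eq_sum_coords {P : Matrix p p ℝ} {Q : Matrix n n ℝ}
    (hP : P * Pᵀ = 1) (hQ : Q * Qᵀ = 1) (X : Matrix p n ℝ) :
    frobNorm X ^ 2 = ∑ i, ∑ j, (Pᵀ * X * Q) i j ^ 2 := by
  simpa [frobNorm_sq_eq_trace] using
    trace_mul_mul_transpose_eq_sum_eigen (L := 1) (ev := 1) hP hQ (by simp) X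

theorem eigenvalue_nonneg_of_posSemidef {Q L : Matrix n n ℝ} {ev : n → ℝ} (hL : L.PosSemidef)
    (hQ : Qᵀ * Q = 1) (hLQ : L * Q = Q * diagonal ev) (j : n) : 0 ≤ ev j := by
  have hD : Qᵀ * L * Q = diagonal ev := by
    rw [Matrix.mul_assoc, hLQ, ← Matrix.mul_assoc, hQ, Matrix.one_mul]
  have h := (hL.conjTranspose_mul_mul_same Q).diag_nonneg (i := j)
  rwa [conjTranspose_eq_transpose_of_trivial, hD, diagonal_apply_eq] at h

end SpectralCoordinates

section TailEnergy

variable {m : Type*} [Fintype m] {n : ℕ}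

def colTailEnergy (k : ℕ) (W : Matrix m (Fin n) ℝ) : ℝ :=
  ∑ i, ∑ j : Fin n, if k ≤ (j : ℕ) then W i j ^ 2 else 0

theorem mul_colTailEnergy_le_sum_eigen {ev : Fin n → ℝ} (hev : Monotone ev) (hev0 : ∀ j, 0 ≤ ev j)
    {k : ℕ} (hk : k < n) (W : Matrix m (Fin n) ℝ) :
    ev ⟨k, hk⟩ * colTailEnergy k W ≤ ∑ i, ∑ j, ev j * W i j ^ 2 := by
  simp only [colTailEnergy, Finset.mul_sum]
  refine Finset.sum_le_sum fun i _ => Finset.sum_le_sum fun j _ => ?_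
  split_ifs with hj
  · exact mul_le_mul_of_nonneg_right (hev (Fin.mk_le_of_le_val hj)) (sq_nonneg _)
  · rw [mul_zero]
    exact mul_nonneg (hev0 j) (sq_nonneg _)

theorem sum_eigen_le_of_colTail_eq_zero {ev : Fin n → ℝ} (hev : Monotone ev) {k : ℕ} (hk : k < n)
    {W : Matrix m (Fin n) ℝ} (hW : ∀ i (j : Fin n), k ≤ (j : ℕ) → W i j = 0) :
    ∑ i, ∑ j, ev j * W i j ^ 2 ≤ ev ⟨k - 1, tsub_le_self.trans_lt hk⟩ * ∑ i, ∑ j, W i j ^ 2 := by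
  simp only [Finset.mul_sum]
  refine Finset.sum_le_sum fun i _ => Finset.sum_le_sum fun j _ => ?_
  by_cases hj : k ≤ (j : ℕ)
  · simp [hW i j hj]
  · exact mul_le_mul_of_nonneg_right (hev (Nat.le_sub_one_of_lt (not_le.mp hj))) (sq_nonneg _)

theorem colTailEnergy_sub_of_colTail_eq_zero {k : ℕ} {V : Matrix m (Fin n) ℝ}
    (hV : ∀ i (j : Fin n), k ≤ (j : ℕ) → V i j = 0) (W : Matrix m (Fin n) ℝ) :
    colTailEnergy k (V - W) = colTailEnergy k W := by
  unfold colTailEnergy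
  refine Finset.sum_congr rfl fun i _ => Finset.sum_congr rfl fun j _ => ?_
  split_ifs with hj
  · simp [hV i j hj]
  · rfl

end TailEnergy

section LowRank

variable {p k : ℕ}

def firstCoordsProj (p k : ℕ) : Matrix (Fin p) (Fin p) ℝ :=
  diagonal fun i => if (i : ℕ) < k then 1 else 0

theorem transpose_mul_submatrix_castLE {P : Matrix (Fin p) (Fin p) ℝ} (hP : Pᵀ * P = 1)
    (h : k ≤ p) :
    Pᵀ * P.submatrix id (Fin.castLE h) =
      (1 : Matrix (Fin p) (Fin p) ℝ).submatrix id (Fin.castLE h) := by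
  have hsub : P.submatrix id (Fin.castLE h) =
      P * (1 : Matrix (Fin p) (Fin p) ℝ).submatrix id (Fin.castLE h) := by
    simpa using (mul_submatrix_one (Equiv.refl (Fin p)) (Fin.castLE h) P).symm
  rw [hsub, ← Matrix.mul_assoc, hP, Matrix.one_mul]

theorem submatrix_one_castLE_mul_transpose (h : k ≤ p) :
    (1 : Matrix (Fin p) (Fin p) ℝ).submatrix id (Fin.castLE h) *
      ((1 : Matrix (Fin p) (Fin p) ℝ).submatrix id (Fin.castLE h))ᵀ = firstCoordsProj p k := by
  ext i j
  simp only [firstCoordsProj, mul_apply, transpose_apply, submatrix_apply, id, one_apply,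
    diagonal_apply, mul_ite, mul_one, mul_zero]
  by_cases hij : i = j
  · subst hij
    simp only [if_true]
    split_ifs with hi
    · rw [Finset.sum_eq_single ⟨i, hi⟩] <;> simp [Fin.ext_iff]
      intro b hb
      omega
    · exact Finset.sum_eq_zero fun x _ => by simp [Fin.ext_iff]; omega
  · rw [if_neg hij]
    exact Finset.sum_eq_zero fun x _ => by split_ifs <;> simp_all

theorem transpose_mulVec_eq_zero_of_inColSpan {P : Matrix (Fin p) (Fin p) ℝ} (hP : Pᵀ * P = 1)
    (h : k ≤ p) {y : Fin p → ℝ} (hy : inColSpan (P.submatrix id (Fin.castLE h)) y) (i : Fin p)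
    (hi : k ≤ (i : ℕ)) : (Pᵀ *ᵥ y) i = 0 := by
  obtain ⟨c, rfl⟩ := hy
  rw [mulVec_mulVec, transpose_mul_submatrix_castLE hP h, mulVec, dotProduct]
  refine Finset.sum_eq_zero fun m _ => ?_
  have : i ≠ Fin.castLE h m := fun him => by
    have := congrArg Fin.val him
    simp at this
    omega
  simp [one_apply, this]


theorem memLR.coords_eq_zero_of_le_row {n kc : ℕ} {P : Matrix (Fin p) (Fin p) ℝ} (hP : Pᵀ * P = 1)
    (h : k ≤ p) {Qk : Matrix (Fin n) (Fin kc) ℝ} {X : Matrix (Fin p) (Fin n) ℝ}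
    (hX : memLR (P.submatrix id (Fin.castLE h)) Qk X) (Q : Matrix (Fin n) (Fin n) ℝ)
    (i : Fin p) (j : Fin n) (hi : k ≤ (i : ℕ)) : (Pᵀ * X * Q) i j = 0 := by
  rw [mul_apply]
  refine Finset.sum_eq_zero fun a _ => ?_
  have hcol : (Pᵀ * X) i a = (Pᵀ *ᵥ fun b => X b a) i := rfl
  rw [hcol, transpose_mulVec_eq_zero_of_inColSpan hP h (hX.1 a) i hi, zero_mul]

theorem memLR.coords_eq_zero_of_le_col {n kr : ℕ} {Q : Matrix (Fin n) (Fin n) ℝ} (hQ : Qᵀ * Q = 1)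
    (h : k ≤ n) {Pk : Matrix (Fin p) (Fin kr) ℝ} {X : Matrix (Fin p) (Fin n) ℝ}
    (hX : memLR Pk (Q.submatrix id (Fin.castLE h)) X) (P : Matrix (Fin p) (Fin p) ℝ)
    (i : Fin p) (j : Fin n) (hj : k ≤ (j : ℕ)) : (Pᵀ * X * Q) i j = 0 := by
  rw [Matrix.mul_assoc, mul_apply]
  refine Finset.sum_eq_zero fun b _ => ?_
  have hrow : (X * Q) b j = (Qᵀ *ᵥ fun a => X b a) j := by
    simp [mul_apply, mulVec, dotProduct, mul_comm]
  rw [hrow, transpose_mulVec_eq_zero_of_inColSpan hQ h (hX.2 b) j hj, mul_zero]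

end LowRank

theorem frobNorm_sub_lowRankProj_sq_le {p n kr kc : ℕ} {P : Matrix (Fin p) (Fin p) ℝ}
    {Q : Matrix (Fin n) (Fin n) ℝ} (hP : Pᵀ * P = 1) (hQ : Qᵀ * Q = 1) (hr : kr ≤ p) (hc : kc ≤ n)
    (X : Matrix (Fin p) (Fin n) ℝ) :
    frobNorm (X - P.submatrix id (Fin.castLE hr) * (P.submatrix id (Fin.castLE hr))ᵀ * X *
        (Q.submatrix id (Fin.castLE hc) * (Q.submatrix id (Fin.castLE hc))ᵀ)) ^ 2 ≤
      colTailEnergy kc (Pᵀ * X * Q) + colTailEnergy kr (Pᵀ * X * Q)ᵀ := by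
  have hP' : P * Pᵀ = 1 := mul_eq_one_comm.mp hP
  have hQ' : Q * Qᵀ = 1 := mul_eq_one_comm.mp hQ
  set W := Pᵀ * X * Q
  have hcoord : Pᵀ * (X - P.submatrix id (Fin.castLE hr) * (P.submatrix id (Fin.castLE hr))ᵀ * X *
        (Q.submatrix id (Fin.castLE hc) * (Q.submatrix id (Fin.castLE hc))ᵀ)) * Q =
      W - firstCoordsProj p kr * W * firstCoordsProj n kc := by
    rw [← submatrix_one_castLE_mul_transpose hr, ← submatrix_one_castLE_mul_transpose hc,
      ← transpose_mul_submatrix_castLE hP hr, ← transpose_mul_submatrix_castLE hQ hc]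
    simp only [W, transpose_mul, transpose_transpose, Matrix.mul_sub, Matrix.sub_mul,
      Matrix.mul_assoc]
    rw [← Matrix.mul_assoc P Pᵀ, hP', Matrix.one_mul, ← Matrix.mul_assoc Q Qᵀ, hQ', Matrix.one_mul]
  rw [frobNorm_sq_eq_sum_coords hP' hQ', hcoord, colTailEnergy, colTailEnergy,
    Finset.sum_comm (γ := Fin n), ← Finset.sum_add_distrib]
  refine Finset.sum_le_sum fun i _ => ?_
  rw [← Finset.sum_add_distrib]
  refine Finset.sum_le_sum fun j _ => ?_
  simp only [firstCoordsProj, Matrix.sub_apply, Matrix.diagonal_mul, Matrix.mul_diagonal,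
    transpose_apply]
  split_ifs <;> first | omega | nlinarith [sq_nonneg (W i j)]

section Objective

variable {a b m n : Type*} [Fintype a] [Fintype b] [Fintype m] [Fintype n]

noncomputable def graphRegObjective (Mr : Matrix a m ℝ) (Mc : Matrix n b ℝ) (Y : Matrix a b ℝ)
    (Lc : Matrix n n ℝ) (Lr : Matrix m m ℝ) (γc γr : ℝ) (X : Matrix m n ℝ) : ℝ :=
  frobNorm (Mr * X * Mc - Y) ^ 2 + γc * trace (X * Lc * Xᵀ) + γr * trace (Xᵀ * Lr * X)

theorem frobNorm_add_smul_sq (A B : Matrix m n ℝ) (t : ℝ) :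
    frobNorm (A + t • B) ^ 2 =
      frobNorm A ^ 2 + t * (trace (A * Bᵀ) + trace (B * Aᵀ)) + t ^ 2 * frobNorm B ^ 2 := by
  classical
  simpa [frobNorm_sq_eq_trace] using trace_add_smul_mul_mul_transpose_add_smul A B 1 t

theorem graphRegObjective_add_smul (Mr : Matrix a m ℝ) (Mc : Matrix n b ℝ) (Y : Matrix a b ℝ)
    (Lc : Matrix n n ℝ) (Lr : Matrix m m ℝ) (γc γr : ℝ) (X H : Matrix m n ℝ) :
    ∃ ℓ : ℝ, ∀ t : ℝ, graphRegObjective Mr Mc Y Lc Lr γc γr (X + t • H) =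
      graphRegObjective Mr Mc Y Lc Lr γc γr X + t * ℓ +
        t ^ 2 * graphRegObjective Mr Mc 0 Lc Lr γc γr H := by
  refine ⟨trace ((Mr * X * Mc - Y) * (Mr * H * Mc)ᵀ) + trace (Mr * H * Mc * (Mr * X * Mc - Y)ᵀ)
    + γc * (trace (X * Lc * Hᵀ) + trace (H * Lc * Xᵀ))
    + γr * (trace (Xᵀ * Lr * H) + trace (Hᵀ * Lr * X)), fun t => ?_⟩
  have hfit : Mr * (X + t • H) * Mc - Y = (Mr * X * Mc - Y) + t • (Mr * H * Mc) := by
    rw [Matrix.mul_add, Matrix.add_mul, Matrix.mul_smul, Matrix.smul_mul]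
    abel
  have hrow := trace_add_smul_mul_mul_transpose_add_smul Xᵀ Hᵀ Lr t
  simp only [← transpose_smul, ← transpose_add, transpose_transpose] at hrow
  simp only [graphRegObjective, hfit, frobNorm_add_smul_sq,
    trace_add_smul_mul_mul_transpose_add_smul, hrow, sub_zero]
  ring

end Objective

structure IsSortedEigenbasis {n : ℕ} (L Q : Matrix (Fin n) (Fin n) ℝ) (ev : Fin n → ℝ) : Prop where
  transpose_mul_self : Qᵀ * Q = 1
  mul_eq : L * Q = Q * diagonal ev
  monotone : Monotone ev

namespace IsSortedEigenbasis

variable {m : Type*} [Fintype m] [DecidableEq m] {n k : ℕ} {L Q : Matrix (Fin n) (Fin n) ℝ}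
  {ev : Fin n → ℝ} {P : Matrix m m ℝ} {γ : ℝ}

theorem mul_colTailEnergy_le (hQ : IsSortedEigenbasis L Q ev) (hev0 : ∀ j, 0 ≤ ev j)
    (hP : P * Pᵀ = 1) (hk : k < n) (hpos : 0 < ev ⟨k, hk⟩) (hγ : 0 ≤ γ) (X : Matrix m (Fin n) ℝ) :
    γ * colTailEnergy k (Pᵀ * X * Q) ≤ γ / ev ⟨k, hk⟩ * trace (X * L * Xᵀ) := by
  rw [trace_mul_mul_transpose_eq_sum_eigen hP (mul_eq_one_comm.mp hQ.transpose_mul_self) hQ.mul_eq]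
  calc γ * colTailEnergy k (Pᵀ * X * Q)
      = γ / ev ⟨k, hk⟩ * (ev ⟨k, hk⟩ * colTailEnergy k (Pᵀ * X * Q)) := by field_simp
    _ ≤ _ := mul_le_mul_of_nonneg_left (mul_colTailEnergy_le_sum_eigen hQ.monotone hev0 hk _)
      (div_nonneg hγ hpos.le)

theorem div_mul_trace_le (hQ : IsSortedEigenbasis L Q ev) (hP : P * Pᵀ = 1) (hk : k < n)
    (hpos : 0 < ev ⟨k, hk⟩) (hγ : 0 ≤ γ) {X : Matrix m (Fin n) ℝ}
    (hX : ∀ i (j : Fin n), k ≤ (j : ℕ) → (Pᵀ * X * Q) i j = 0) :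
    γ / ev ⟨k, hk⟩ * trace (X * L * Xᵀ) ≤
      γ * (ev ⟨k - 1, tsub_le_self.trans_lt hk⟩ / ev ⟨k, hk⟩) * frobNorm X ^ 2 := by
  have hQ' : Q * Qᵀ = 1 := mul_eq_one_comm.mp hQ.transpose_mul_self
  rw [trace_mul_mul_transpose_eq_sum_eigen hP hQ' hQ.mul_eq, frobNorm_sq_eq_sum_coords hP hQ']
  calc γ / ev ⟨k, hk⟩ * ∑ i, ∑ j, ev j * (Pᵀ * X * Q) i j ^ 2
      ≤ γ / ev ⟨k, hk⟩ * (ev ⟨k - 1, tsub_le_self.trans_lt hk⟩ * ∑ i, ∑ j, (Pᵀ * X * Q) i j ^ 2) :=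
        mul_le_mul_of_nonneg_left (sum_eigen_le_of_colTail_eq_zero hQ.monotone hk hX)
          (div_nonneg hγ hpos.le)
    _ = _ := by ring

end IsSortedEigenbasis

section TwoSided

variable {a b : Type*} [Fintype a] [Fintype b] {p n kr kc : ℕ} {Lr P : Matrix (Fin p) (Fin p) ℝ}
  {Lc Q : Matrix (Fin n) (Fin n) ℝ} {evr : Fin p → ℝ} {evc : Fin n → ℝ} {γ : ℝ}

theorem transpose_mul_transpose_mul (P : Matrix (Fin p) (Fin p) ℝ) (X : Matrix (Fin p) (Fin n) ℝ)
    (Q : Matrix (Fin n) (Fin n) ℝ) : Qᵀ * Xᵀ * P = (Pᵀ * X * Q)ᵀ := by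
  simp [Matrix.mul_assoc]

theorem mul_tailEnergies_le_graphRegObjective (hr : IsSortedEigenbasis Lr P evr)
    (hc : IsSortedEigenbasis Lc Q evc) (hevr0 : ∀ i, 0 ≤ evr i) (hevc0 : ∀ j, 0 ≤ evc j)
    (hkr : kr < p) (hkc : kc < n) (hposr : 0 < evr ⟨kr, hkr⟩) (hposc : 0 < evc ⟨kc, hkc⟩)
    (hγ : 0 ≤ γ) (Mr : Matrix a (Fin p) ℝ) (Mc : Matrix (Fin n) b ℝ) (Y : Matrix a b ℝ)
    (X : Matrix (Fin p) (Fin n) ℝ) :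
    γ * (colTailEnergy kc (Pᵀ * X * Q) + colTailEnergy kr (Pᵀ * X * Q)ᵀ) ≤
      graphRegObjective Mr Mc Y Lc Lr (γ / evc ⟨kc, hkc⟩) (γ / evr ⟨kr, hkr⟩) X := by
  have hcol := hc.mul_colTailEnergy_le hevc0 (mul_eq_one_comm.mp hr.transpose_mul_self) hkc hposc
    hγ X
  have hrow := hr.mul_colTailEnergy_le hevr0 (mul_eq_one_comm.mp hc.transpose_mul_self) hkr hposr
    hγ Xᵀ
  rw [transpose_transpose, transpose_mul_transpose_mul] at hrow
  unfold graphRegObjective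
  nlinarith [sq_nonneg (frobNorm (Mr * X * Mc - Y))]

theorem graphRegObjective_le_of_memLR (hr : IsSortedEigenbasis Lr P evr)
    (hc : IsSortedEigenbasis Lc Q evc) (hkr : kr < p) (hkc : kc < n) (hposr : 0 < evr ⟨kr, hkr⟩)
    (hposc : 0 < evc ⟨kc, hkc⟩) (hγ : 0 ≤ γ) (Mr : Matrix a (Fin p) ℝ) (Mc : Matrix (Fin n) b ℝ)
    {X : Matrix (Fin p) (Fin n) ℝ}
    (hX : memLR (P.submatrix id (Fin.castLE hkr.le)) (Q.submatrix id (Fin.castLE hkc.le)) X)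
    (E : Matrix a b ℝ) :
    graphRegObjective Mr Mc (Mr * X * Mc + E) Lc Lr (γ / evc ⟨kc, hkc⟩) (γ / evr ⟨kr, hkr⟩) X ≤
      frobNorm E ^ 2 + γ * (evc ⟨kc - 1, tsub_le_self.trans_lt hkc⟩ / evc ⟨kc, hkc⟩
        + evr ⟨kr - 1, tsub_le_self.trans_lt hkr⟩ / evr ⟨kr, hkr⟩) * frobNorm X ^ 2 := by
  have hcol := hc.div_mul_trace_le (mul_eq_one_comm.mp hr.transpose_mul_self) hkc hposc hγ
    (hX.coords_eq_zero_of_le_col hc.transpose_mul_self hkc.le P)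
  have hrow := hr.div_mul_trace_le (mul_eq_one_comm.mp hc.transpose_mul_self) hkr hposr hγ
    (X := Xᵀ) fun j i hi => by
      rw [transpose_mul_transpose_mul]
      exact hX.coords_eq_zero_of_le_row hr.transpose_mul_self hkr.le Q i j hi
  rw [transpose_transpose, frobNorm_transpose] at hrow
  have hfit : Mr * X * Mc - (Mr * X * Mc + E) = -E := by abel
  rw [graphRegObjective, hfit, frobNorm_neg]
  linarith

end TwoSided

/-- The 1-indexed eigenvalues `λ_{k_c}`, `λ_{k_c+1}` are `evc ⟨kc - 1, _⟩`, `evc ⟨kc, _⟩`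
(similarly for `r`). -/
theorem alternate_decoder_error_bound
    (p n ρr ρc kr kc : ℕ) (hkr : kr < p) (hkc : kc < n)
    (Lr : Matrix (Fin p) (Fin p) ℝ) (Lc : Matrix (Fin n) (Fin n) ℝ)
    (hLr : Lr.PosSemidef) (hLc : Lc.PosSemidef)
    (evr : Fin p → ℝ) (evc : Fin n → ℝ) (hevr : Monotone evr) (hevc : Monotone evc)
    (P : Matrix (Fin p) (Fin p) ℝ) (Q : Matrix (Fin n) (Fin n) ℝ)
    (hPorth : Pᵀ * P = 1) (hQorth : Qᵀ * Q = 1)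
    (hLrP : Lr * P = P * Matrix.diagonal evr)
    (hLcQ : Lc * Q = Q * Matrix.diagonal evc)
    (Pkr : Matrix (Fin p) (Fin kr) ℝ) (hPkr : Pkr = P.submatrix id (Fin.castLE hkr.le))
    (Qkc : Matrix (Fin n) (Fin kc) ℝ) (hQkc : Qkc = Q.submatrix id (Fin.castLE hkc.le))
    (Mr : Matrix (Fin ρr) (Fin p) ℝ)
    (Mc : Matrix (Fin n) (Fin ρc) ℝ)
    (hlamc1 : 0 < evc ⟨kc, hkc⟩) (hlamr1 : 0 < evr ⟨kr, hkr⟩)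
    (γ γc γr : ℝ) (hγ : 0 < γ)
    (hγc : γc = γ / evc ⟨kc, hkc⟩) (hγr : γr = γ / evr ⟨kr, hkr⟩)
    (Xbar : Matrix (Fin p) (Fin n) ℝ) (hXbar : memLR Pkr Qkc Xbar)
    (Etil : Matrix (Fin ρr) (Fin ρc) ℝ)
    (Xtil : Matrix (Fin ρr) (Fin ρc) ℝ) (hXtil : Xtil = Mr * Xbar * Mc + Etil)
    (Xstar : Matrix (Fin p) (Fin n) ℝ)
    (hmin : ∀ X : Matrix (Fin p) (Fin n) ℝ,
      (frobNorm (Mr * Xstar * Mc - Xtil)) ^ 2 + γc * Matrix.trace (Xstar * Lc * Xstarᵀ)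
        + γr * Matrix.trace (Xstarᵀ * Lr * Xstar) ≤
      (frobNorm (Mr * X * Mc - Xtil)) ^ 2 + γc * Matrix.trace (X * Lc * Xᵀ)
        + γr * Matrix.trace (Xᵀ * Lr * X))
    (Xbarstar : Matrix (Fin p) (Fin n) ℝ)
    (hXbarstar : Xbarstar = Pkr * Pkrᵀ * Xstar * (Qkc * Qkcᵀ)) :
    frobNorm (Xstar - Xbarstar) ≤
      frobNorm Etil / Real.sqrt (2 * γ) +
        (1 / Real.sqrt 2) *
          Real.sqrt (evc ⟨kc - 1, by omega⟩ / evc ⟨kc, hkc⟩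
            + evr ⟨kr - 1, by omega⟩ / evr ⟨kr, hkr⟩) * frobNorm Xbar := by
  subst hPkr hQkc hγc hγr hXtil hXbarstar
  have hr : IsSortedEigenbasis Lr P evr := ⟨hPorth, hLrP, hevr⟩
  have hc : IsSortedEigenbasis Lc Q evc := ⟨hQorth, hLcQ, hevc⟩
  have hevr0 := eigenvalue_nonneg_of_posSemidef hLr hPorth hLrP
  have hevc0 := eigenvalue_nonneg_of_posSemidef hLc hQorth hLcQ
  have hfit := mul_tailEnergies_le_graphRegObjective hr hc hevr0 hevc0 hkr hkc hlamr1 hlamc1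
    hγ.le Mr Mc (Mr * Xbar * Mc + Etil) Xstar
  have hcurv := mul_tailEnergies_le_graphRegObjective hr hc hevr0 hevc0 hkr hkc hlamr1 hlamc1
    hγ.le Mr Mc 0 (Xbar - Xstar)
  rw [Matrix.mul_sub, Matrix.sub_mul, transpose_sub,
    colTailEnergy_sub_of_colTail_eq_zero (hXbar.coords_eq_zero_of_le_col hQorth hkc.le P),
    colTailEnergy_sub_of_colTail_eq_zero (V := (Pᵀ * Xbar * Q)ᵀ)
      (fun j i hi => hXbar.coords_eq_zero_of_le_row hPorth hkr.le Q i j hi)] at hcurv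
  have hopt := add_le_of_forall_le_of_quadratic (graphRegObjective_add_smul Mr Mc _ Lc Lr _ _ Xstar)
    hmin Xbar
  have hbar := graphRegObjective_le_of_memLR hr hc hkr hkc hlamr1 hlamc1 hγ.le Mr Mc hXbar Etil
  have herr := frobNorm_sub_lowRankProj_sq_le hPorth hQorth hkr.le hkc.le Xstar
  refine le_div_sqrt_add_mul_sqrt_mul hγ (frobNorm_nonneg _)
    (add_nonneg (div_nonneg (hevc0 _) hlamc1.le) (div_nonneg (hevr0 _) hlamr1.le))
    (frobNorm_nonneg _) ?_
  linarith [mul_le_mul_of_nonneg_left herr hγ.le]
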